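/- For each fixed r > 1, the map λ ↦ Θ_λ(r) = ∫₁^r [1 − y² + 2λ(y−1)/η_λ(r) + (2 log y)/η_λ(r)²]^{−1/2} dy is (strictly) increasing on [0,∞). -/

import Mathlib

/-!
Write `η = η_λ(r)`. By construction `η` is the positive root of
`η² = 2λη/(r+1) + 2 log r/(r² - 1)`, and eliminating `λ` with this relation turns the radicand into
`(y - 1)(r - y) + 2((r - 1) log y - (y - 1) log r) / ((r - 1) η²)`.
The numerator of the second term is positive on `(1, r)` by strict concavity of `log`, and `η` is
strictly increasing in `λ`; so for `λ < μ` the radicand for `μ` is strictly smaller at every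
`y ∈ (1, r)`, and the integrand strictly larger. Both integrands are dominated by
`((y - 1)(r - y))^(-1/2)`, which is integrable, so the integrals compare strictly.
-/

open Real MeasureTheory Set

lemma add_sqrt_sq_eq {b c : ℝ} (h : 0 ≤ b ^ 2 + c) :
    (b + √(b ^ 2 + c)) ^ 2 = 2 * b * (b + √(b ^ 2 + c)) + c := by
  linear_combination sq_sqrt h

lemma add_sqrt_sq_add_pos (b : ℝ) {c : ℝ} (hc : 0 < c) : 0 < b + √(b ^ 2 + c) := by
  have : |b| < √(b ^ 2 + c) := by
    rw [← sqrt_sq_eq_abs]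
    exact sqrt_lt_sqrt (sq_nonneg b) (by linarith)
  linarith [neg_abs_le b]

lemma sub_one_mul_log_lt {y r : ℝ} (hy : 1 < y) (hyr : y < r) :
    (y - 1) * log r < (r - 1) * log y := by
  have := strictConcaveOn_log_Ioi.neg.secant_strict_mono_aux1
    (mem_Ioi.2 one_pos) (mem_Ioi.2 (by linarith : (0 : ℝ) < r)) hy hyr
  simp only [Pi.neg_apply, log_one] at this
  linarith

lemma intervalIntegrable_sub_rpow_mul_sub_rpow {a b p q : ℝ} (hab : a < b) (hp : -1 < p)
    (hq : -1 < q) :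
    IntervalIntegrable (fun y => (y - a) ^ p * (b - y) ^ q) volume a b := by
  obtain ⟨m, ham, hmb⟩ := exists_between hab
  have hleft : IntervalIntegrable (fun y => (y - a) ^ p) volume a m := by
    simpa using
      (intervalIntegral.intervalIntegrable_rpow' (a := 0) (b := m - a) hp).comp_sub_right a
  have hright : IntervalIntegrable (fun y => (b - y) ^ q) volume m b := by
    simpa using
      ((intervalIntegral.intervalIntegrable_rpow' (a := 0) (b := b - m) hq).comp_sub_left b).symm
  refine IntervalIntegrable.trans (b := m) (hleft.mul_continuousOn ?_) (hright.continuousOn_mul ?_)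
  · rw [uIcc_of_le ham.le]
    exact ContinuousOn.rpow_const (by fun_prop)
      fun y hy => Or.inl (by linarith [hy.2])
  · rw [uIcc_of_le hmb.le]
    exact ContinuousOn.rpow_const (by fun_prop)
      fun y hy => Or.inl (by linarith [hy.1])

namespace SemiPeriod

noncomputable def eta (r lam : ℝ) : ℝ :=
  lam / (r + 1) + √(lam ^ 2 / (r + 1) ^ 2 + 2 * log r / (r ^ 2 - 1))

/-- The expression under the power `-1/2` in `Θ_λ(r)`. -/
noncomputable def radicand (r lam y : ℝ) : ℝ :=
  1 - y ^ 2 + 2 * lam * (y - 1) / eta r lam + 2 * log y / eta r lam ^ 2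

variable {r : ℝ}

lemma log_div_sq_sub_one_pos (hr : 1 < r) : 0 < 2 * log r / (r ^ 2 - 1) :=
  div_pos (by linarith [log_pos hr]) (by nlinarith)

lemma eta_pos (hr : 1 < r) (lam : ℝ) : 0 < eta r lam := by
  have := add_sqrt_sq_add_pos (lam / (r + 1)) (log_div_sq_sub_one_pos hr)
  rwa [div_pow] at this

lemma eta_sq (hr : 1 < r) (lam : ℝ) :
    eta r lam ^ 2 = 2 * lam * eta r lam / (r + 1) + 2 * log r / (r ^ 2 - 1) := by
  have h := add_sqrt_sq_eq (b := lam / (r + 1)) (c := 2 * log r / (r ^ 2 - 1))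
    (by linarith [sq_nonneg (lam / (r + 1)), log_div_sq_sub_one_pos hr])
  rw [div_pow] at h
  rw [eta, h]
  ring

lemma eta_strictMonoOn (hr : 1 < r) : StrictMonoOn (eta r) (Ici 0) := by
  intro a ha b _ hab
  have hsq : a ^ 2 ≤ b ^ 2 := pow_le_pow_left₀ ha hab.le 2
  unfold eta
  gcongr
  exact add_nonneg (by positivity) (log_div_sq_sub_one_pos hr).le

lemma radicand_eq (hr : 1 < r) (lam y : ℝ) :
    radicand r lam y =
      (y - 1) * (r - y) + 2 * ((r - 1) * log y - (y - 1) * log r) / ((r - 1) * eta r lam ^ 2) := by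
  have hE := (eta_pos hr lam).ne'
  have hsq := eta_sq hr lam
  have hr1 : r - 1 ≠ 0 := by linarith
  have hr2 : r + 1 ≠ 0 := by linarith
  rw [show r ^ 2 - 1 = (r - 1) * (r + 1) by ring] at hsq
  field_simp at hsq
  unfold radicand
  field_simp
  linear_combination (-(y - 1)) * hsq

lemma lt_radicand (hr : 1 < r) (lam : ℝ) {y : ℝ} (hy : y ∈ Ioo 1 r) :
    (y - 1) * (r - y) < radicand r lam y := by
  have hchord := sub_one_mul_log_lt hy.1 hy.2
  have hE := eta_pos hr lam
  rw [radicand_eq hr lam, lt_add_iff_pos_right]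
  exact div_pos (by linarith) (mul_pos (by linarith) (by positivity))

lemma radicand_pos (hr : 1 < r) (lam : ℝ) {y : ℝ} (hy : y ∈ Ioo 1 r) :
    0 < radicand r lam y :=
  (mul_pos (by linarith [hy.1]) (by linarith [hy.2])).trans (lt_radicand hr lam hy)

lemma radicand_strictAntiOn (hr : 1 < r) {y : ℝ} (hy : y ∈ Ioo 1 r) :
    StrictAntiOn (fun lam => radicand r lam y) (Ici 0) := by
  intro a ha b hb hab
  have hchord := sub_one_mul_log_lt hy.1 hy.2
  have hEa := eta_pos hr a
  have hE := eta_strictMonoOn hr ha hb hab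
  simp only
  rw [radicand_eq hr a, radicand_eq hr b, add_lt_add_iff_left]
  gcongr

lemma intervalIntegrable_radicand_rpow (hr : 1 < r) (lam : ℝ) :
    IntervalIntegrable (fun y => radicand r lam y ^ (-(1 : ℝ) / 2)) volume 1 r := by
  refine (intervalIntegrable_sub_rpow_mul_sub_rpow hr (p := -(1 : ℝ) / 2) (q := -(1 : ℝ) / 2)
    (by norm_num) (by norm_num)).mono_fun' ?_ ?_
  · unfold radicand
    exact Measurable.aestronglyMeasurable (by fun_prop)
  · rw [uIoc_of_le hr.le, ← Measure.restrict_congr_set Ioo_ae_eq_Ioc]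
    filter_upwards [ae_restrict_mem measurableSet_Ioo] with y hy
    have hbase : 0 < (y - 1) * (r - y) := mul_pos (by linarith [hy.1]) (by linarith [hy.2])
    rw [norm_of_nonneg (rpow_nonneg (radicand_pos hr lam hy).le _),
      ← mul_rpow (by linarith [hy.1]) (by linarith [hy.2])]
    exact rpow_le_rpow_of_nonpos hbase (lt_radicand hr lam hy).le (by norm_num)

end SemiPeriod

/-- For each fixed r > 1, the map λ ↦ Θ_λ(r) is strictly increasing on [0,∞). -/
theorem theta_strictMono_in_lambda (r : ℝ) (hr : 1 < r) :
    StrictMonoOn (fun lam : ℝ =>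
        ∫ y in (1:ℝ)..r,
          (1 - y ^ 2 +
              2 * lam * (y - 1) / (lam / (r + 1) +
                Real.sqrt (lam ^ 2 / (r + 1) ^ 2 + 2 * Real.log r / (r ^ 2 - 1))) +
              2 * Real.log y / (lam / (r + 1) +
                Real.sqrt (lam ^ 2 / (r + 1) ^ 2 + 2 * Real.log r / (r ^ 2 - 1))) ^ 2)
            ^ (-(1:ℝ)/2))
      (Set.Ici (0 : ℝ)) := by
  intro a ha b hb hab
  change ∫ y in (1 : ℝ)..r, SemiPeriod.radicand r a y ^ (-(1 : ℝ) / 2)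
    < ∫ y in (1 : ℝ)..r, SemiPeriod.radicand r b y ^ (-(1 : ℝ) / 2)
  have hFa := SemiPeriod.intervalIntegrable_radicand_rpow hr a
  have hFb := SemiPeriod.intervalIntegrable_radicand_rpow hr b
  rw [← sub_pos, ← intervalIntegral.integral_sub hFb hFa]
  refine intervalIntegral.intervalIntegral_pos_of_pos_on (hFb.sub hFa) (fun y hy => ?_) hr
  exact sub_pos.2 (rpow_lt_rpow_of_neg (SemiPeriod.radicand_pos hr b hy)
    (SemiPeriod.radicand_strictAntiOn hr hy ha hb hab) (by norm_num))
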